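/- arXiv:2408.03933 — 3 statements merged into one kernel-verified Lean document; each statement's English description precedes it below -/
import Mathlib

section
/- Let 0 < ε ≤ 1/2. If there exists a collection P of pairwise vertex-disjoint directed paths in D_vertex such that for at least (1/2 + ε)·2k of the 2k terminal pairs (s,t) ∈ T the collection P contains a shortest s⇝t path, then G contains a clique of size at least 2εk. -/
/-!
The height `vHeight` of a vertex, its position along the `a_i ⇝ b_i` direction, rises by at
most one along every edge of `D_vertex`, and the canonical path attains this bound. So a
shortest `a_i ⇝ b_i` path rises by exactly one at every step; such steps never leave the
vertical nodes `vNode G i j r ℓ` of a single row `r`, and the path meets all of them.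
Reflecting the grid in its diagonal gives the same for `c_j ⇝ d_j` paths and the horizontal
nodes of a column `c`. Vertex-disjointness forces `(r_i, c_j) ∈ S_{i,j}` whenever both pairs
are satisfied: on the diagonal `r_i = c_i`, off it `v_{r_i} v_{c_j}` is an edge. Hence the
rows of the at least `2εk` indices `i` with both `(a_i, b_i)` and `(c_i, d_i)` satisfied form
a clique.
-/

/-- A directed path (self-avoiding walk) from `s` to `t` in the digraph with
edge relation `E`, given as the list of its vertices in order. -/
structure IsPathList {V : Type*} (E : V → V → Prop) (s t : V) (p : List V) : Prop where
  chain : p.Chain' E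
  nodup : p.Nodup
  head : p.head? = some s
  last : p.getLast? = some t

/-- A shortest directed `s⇝t` path, where the length of a path is its number of vertices. -/
def IsShortestDirPath {V : Type*} (E : V → V → Prop) (s t : V) (p : List V) : Prop :=
  IsPathList E s t p ∧ ∀ q : List V, IsPathList E s t q → p.length ≤ q.length

/-- Symmetrization of a relation: the adjacency of the undirected graph obtained by
forgetting the orientation of the edges. -/
def UAdj {V : Type*} (E : V → V → Prop) (x y : V) : Prop := E x y ∨ E y x

/-- The cost of a path: the sum of the costs of its vertices. -/
def pathCost {V : Type*} (cost : V → ℕ) (p : List V) : ℕ := (p.map cost).sum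

/-- A shortest (minimum-cost) `s`–`t` path in the undirected graph obtained from `E`. -/
def IsShortestCostPath {V : Type*} (E : V → V → Prop) (cost : V → ℕ) (s t : V)
    (p : List V) : Prop :=
  IsPathList (UAdj E) s t p ∧
    ∀ q : List V, IsPathList (UAdj E) s t q → pathCost cost p ≤ pathCost cost q

/-- The (directed) edges traversed by a path, as ordered pairs of consecutive vertices. -/
def dirEdges {V : Type*} (p : List V) : List (V × V) := p.zip p.tail

/-- Two directed paths are edge-disjoint. -/
def EdgeDisj {V : Type*} (p q : List V) : Prop := ∀ e ∈ dirEdges p, e ∉ dirEdges q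

/-- The (undirected) edges traversed by a path, as unordered pairs. -/
def uEdges {V : Type*} (p : List V) : List (Sym2 V) := (dirEdges p).map fun e => s(e.1, e.2)

/-- Two undirected paths are edge-disjoint. -/
def UEdgeDisj {V : Type*} (p q : List V) : Prop := ∀ e ∈ uEdges p, e ∉ uEdges q

/-- Two paths are vertex-disjoint. -/
def VertDisj {V : Type*} (p q : List V) : Prop := ∀ v ∈ p, v ∉ q

/-- `(q,ℓ) ∈ S_{i,j}`: for `i = j` this means `q = ℓ` and for `i ≠ j` it means that
`v_q v_ℓ` is an edge of `G`. -/
def Split {k N : ℕ} (G : SimpleGraph (Fin N)) (i j : Fin k) (q ℓ : Fin N) : Prop :=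
  (i = j ∧ q = ℓ) ∨ (i ≠ j ∧ G.Adj q ℓ)

instance {k N : ℕ} (G : SimpleGraph (Fin N)) [DecidableRel G.Adj]
    (i j : Fin k) (q ℓ : Fin N) : Decidable (Split G i j q ℓ) := by
  unfold Split; infer_instance

/-- The vertices of the graph `D_vertex` (also the vertex set of `U_vertex`): each grid
vertex `w_{i,j}^{q,ℓ}` of `D_int` gives rise to `gridH i j q ℓ` (the vertex `w_Hor`) and
`gridV i j q ℓ` (the vertex `w_Ver`, which carries edges only when `w` is vertex-split;
when `w` is not split the single vertex `w_Hor = w_Ver` is represented by `gridH` and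
`gridV` is isolated), plus the terminal vertices. -/
inductive DVertV (k N : ℕ) where
  | gridH (i j : Fin k) (q ℓ : Fin N)
  | gridV (i j : Fin k) (q ℓ : Fin N)
  | a (i : Fin k)
  | b (i : Fin k)
  | c (j : Fin k)
  | d (j : Fin k)
  deriving DecidableEq

/-- The vertex of `D_vertex` carrying the vertical (south/north) edges at the former
grid vertex `w_{i,j}^{q,ℓ}`: `w_Ver` if it is vertex-split, and `w_Hor = w_Ver`
otherwise. -/
def vNode {k N : ℕ} (G : SimpleGraph (Fin N)) [DecidableRel G.Adj]
    (i j : Fin k) (q ℓ : Fin N) : DVertV k N :=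
  if Split G i j q ℓ then DVertV.gridV i j q ℓ else DVertV.gridH i j q ℓ

/-- The directed edges of `D_vertex`: horizontal (west/east) edges attach to `w_Hor`
and vertical (south/north) edges attach to `w_Ver` (with `w_Hor = w_Ver` at non-split
vertices); terminal edges play the role of the corresponding boundary edges. -/
inductive DVertE (k N : ℕ) (G : SimpleGraph (Fin N)) [DecidableRel G.Adj] :
    DVertV k N → DVertV k N → Prop where
  /-- former edge `w_{i,j}^{q,ℓ} → w_{i,j}^{q,ℓ+1}` (vertical) -/
  | up (i j : Fin k) (q ℓ ℓ' : Fin N) (h : (ℓ' : ℕ) = (ℓ : ℕ) + 1) :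
      DVertE k N G (vNode G i j q ℓ) (vNode G i j q ℓ')
  /-- former edge `w_{i,j}^{q,ℓ} → w_{i,j}^{q+1,ℓ}` (horizontal) -/
  | right (i j : Fin k) (q q' ℓ : Fin N) (h : (q' : ℕ) = (q : ℕ) + 1) :
      DVertE k N G (.gridH i j q ℓ) (.gridH i j q' ℓ)
  /-- former edge `w_{i,j}^{N,ℓ} → w_{i+1,j}^{1,ℓ}` (horizontal) -/
  | hmatch (i i' j : Fin k) (q q' ℓ : Fin N)
      (hi : (i' : ℕ) = (i : ℕ) + 1) (hq : (q : ℕ) + 1 = N) (hq' : (q' : ℕ) = 0) :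
      DVertE k N G (.gridH i j q ℓ) (.gridH i' j q' ℓ)
  /-- former edge `w_{i,j}^{ℓ,N} → w_{i,j+1}^{ℓ,1}` (vertical) -/
  | vmatch (i j j' : Fin k) (q ℓ ℓ' : Fin N)
      (hj : (j' : ℕ) = (j : ℕ) + 1) (hl : (ℓ : ℕ) + 1 = N) (hl' : (ℓ' : ℕ) = 0) :
      DVertE k N G (vNode G i j q ℓ) (vNode G i j' q ℓ')
  /-- former edge `a_i → w_{i,1}^{q,1}` (vertical: `a_i` plays the south neighbour) -/
  | srcA (i j : Fin k) (q ℓ : Fin N) (hj : (j : ℕ) = 0) (hl : (ℓ : ℕ) = 0) :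
      DVertE k N G (.a i) (vNode G i j q ℓ)
  /-- former edge `w_{i,k}^{q,N} → b_i` (vertical) -/
  | snkB (i j : Fin k) (q ℓ : Fin N) (hj : (j : ℕ) + 1 = k) (hl : (ℓ : ℕ) + 1 = N) :
      DVertE k N G (vNode G i j q ℓ) (.b i)
  /-- former edge `c_j → w_{1,j}^{1,ℓ}` (horizontal: `c_j` plays the west neighbour) -/
  | srcC (i j : Fin k) (q ℓ : Fin N) (hi : (i : ℕ) = 0) (hq : (q : ℕ) = 0) :
      DVertE k N G (.c j) (.gridH i j q ℓ)
  /-- former edge `w_{k,j}^{N,ℓ} → d_j` (horizontal) -/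
  | snkD (i j : Fin k) (q ℓ : Fin N) (hi : (i : ℕ) + 1 = k) (hq : (q : ℕ) + 1 = N) :
      DVertE k N G (.gridH i j q ℓ) (.d j)

/-- `Canonical_vertex(r; c_j⇝d_j)`: obtained from `Canonical(r; c_j⇝d_j)` by routing
through `w_Hor` at every vertex-split grid vertex (and through `w_Hor = w_Ver` at
not-split vertices). -/
def canonVertH (k N : ℕ) (j : Fin k) (r : Fin N) : List (DVertV k N) :=
  DVertV.c j ::
    (((List.finRange k).flatMap fun i =>
        (List.finRange N).map fun q => DVertV.gridH i j q r) ++ [DVertV.d j])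

/-- `Canonical_vertex(r; a_i⇝b_i)`: obtained from `Canonical(r; a_i⇝b_i)` by routing
through `w_Ver` at every vertex-split grid vertex (and through `w_Hor = w_Ver` at
not-split vertices). -/
def canonVertV {k N : ℕ} (G : SimpleGraph (Fin N)) [DecidableRel G.Adj]
    (i : Fin k) (r : Fin N) : List (DVertV k N) :=
  DVertV.a i ::
    (((List.finRange k).flatMap fun j =>
        (List.finRange N).map fun ℓ => vNode G i j r ℓ) ++ [DVertV.b i])
/-- The source of the `x`-th terminal pair of `T`: `a_i` for `x = inl i`
(pair `(a_i, b_i)`), and `c_j` for `x = inr j` (pair `(c_j, d_j)`). -/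
def vSrc {k N : ℕ} (x : Fin k ⊕ Fin k) : DVertV k N :=
  match x with
  | .inl i => DVertV.a i
  | .inr j => DVertV.c j

/-- The sink of the `x`-th terminal pair of `T`. -/
def vDst {k N : ℕ} (x : Fin k ⊕ Fin k) : DVertV k N :=
  match x with
  | .inl i => DVertV.b i
  | .inr j => DVertV.d j

section Potential

variable {V : Type*} {E : V → V → Prop} (φ : V → ℕ)

theorem add_one_le_add_length_of_isChain (hE : ∀ v w, E v w → φ w ≤ φ v + 1) :
    ∀ {l : List V} {s t : V}, l.IsChain E → l.head? = some s → l.getLast? = some t →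
      φ t + 1 ≤ φ s + l.length
  | [], _, _, _, hs, _ => by simp at hs
  | [v], s, t, _, hs, ht => by simp_all
  | v :: w :: l, s, t, h, hs, ht => by
    obtain ⟨hvw, h⟩ := List.isChain_cons_cons.mp h
    have htail := add_one_le_add_length_of_isChain hE h rfl (List.getLast?_cons_cons ▸ ht)
    obtain rfl : v = s := by simpa using hs
    have hstep := hE _ _ hvw
    simp only [List.length_cons] at htail ⊢
    omega

theorem isChain_succ_of_length_le (hE : ∀ v w, E v w → φ w ≤ φ v + 1) :
    ∀ {l : List V} {s t : V}, l.IsChain E → l.head? = some s → l.getLast? = some t →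
      φ s + l.length ≤ φ t + 1 → l.IsChain (fun v w => E v w ∧ φ w = φ v + 1)
  | [], _, _, _, _, _, _ => .nil
  | [_], _, _, _, _, _, _ => .singleton _
  | v :: w :: l, s, t, h, hs, ht, hlen => by
    obtain ⟨hvw, h⟩ := List.isChain_cons_cons.mp h
    have ht' : (w :: l).getLast? = some t := List.getLast?_cons_cons ▸ ht
    obtain rfl : v = s := by simpa using hs
    have hlow := add_one_le_add_length_of_isChain φ hE h rfl ht'
    have hup := hE _ _ hvw
    simp only [List.length_cons] at hlen hlow
    exact List.isChain_cons_cons.mpr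
      ⟨⟨hvw, by omega⟩,
        isChain_succ_of_length_le hE h rfl ht' (by simp only [List.length_cons]; omega)⟩

theorem exists_mem_eq_of_isChain_succ :
    ∀ {l : List V} {s t : V}, l.IsChain (fun v w => φ w = φ v + 1) → l.head? = some s →
      l.getLast? = some t → ∀ n, φ s ≤ n → n ≤ φ t → ∃ v ∈ l, φ v = n
  | [], _, _, _, hs, _, _, _, _ => by simp at hs
  | [v], s, t, _, hs, ht, n, hsn, hnt => by
    obtain rfl : v = s := by simpa using hs
    obtain rfl : v = t := by simpa using ht
    exact ⟨v, List.mem_singleton_self v, by omega⟩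
  | v :: w :: l, s, t, h, hs, ht, n, hsn, hnt => by
    obtain ⟨hvw, h⟩ := List.isChain_cons_cons.mp h
    obtain rfl : v = s := by simpa using hs
    rcases Nat.eq_or_lt_of_le hsn with rfl | hlt
    · exact ⟨v, List.mem_cons_self, rfl⟩
    · obtain ⟨u, hu, rfl⟩ := exists_mem_eq_of_isChain_succ h rfl
        (List.getLast?_cons_cons ▸ ht) n (by omega) hnt
      exact ⟨u, List.mem_cons_of_mem _ hu, rfl⟩

theorem isPathList_of_isChain_succ {l : List V} {s t : V}
    (h : l.IsChain (fun v w => E v w ∧ φ w = φ v + 1)) (hs : l.head? = some s)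
    (ht : l.getLast? = some t) : IsPathList E s t l where
  chain := h.imp fun _ _ => And.left
  nodup := by
    have : (l.map φ).IsChain (· < ·) :=
      (List.isChain_map φ).mpr (h.imp fun _ _ hvw => by omega)
    exact List.Nodup.of_map φ (this.pairwise.imp (fun h => h.ne))
  head := hs
  last := ht

theorem IsPathList.map {f : V → V} (hf : f.Injective) (hE : ∀ v w, E v w → E (f v) (f w))
    {s t : V} {p : List V} (h : IsPathList E s t p) : IsPathList E (f s) (f t) (p.map f) where
  chain := (List.isChain_map f).mpr (h.chain.imp hE)
  nodup := h.nodup.map hf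
  head := by rw [List.head?_map, h.head]; rfl
  last := by rw [List.getLast?_map, h.last]; rfl

theorem IsShortestDirPath.map_of_involutive {f : V → V} (hf : f.Involutive)
    (hE : ∀ v w, E v w → E (f v) (f w)) {s t : V} {p : List V}
    (h : IsShortestDirPath E s t p) : IsShortestDirPath E (f s) (f t) (p.map f) := by
  refine ⟨h.1.map hf.injective hE, fun q hq => ?_⟩
  have := h.2 _ (by simpa [hf _, List.map_map, hf.comp_self] using hq.map hf.injective hE)
  simpa using this

end Potential

theorem Nat.eq_and_eq_of_mul_add_eq {N j j' ℓ ℓ' : ℕ} (hℓ : ℓ < N) (hℓ' : ℓ' < N)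
    (h : j * N + ℓ = j' * N + ℓ') : j = j' ∧ ℓ = ℓ' := by
  have hN : 0 < N := by omega
  have hdiv := congrArg (· / N) h
  have hmod := congrArg (· % N) h
  simp only [Nat.add_comm (_ * N), Nat.add_mul_div_right _ _ hN, Nat.div_eq_of_lt hℓ,
    Nat.div_eq_of_lt hℓ', Nat.add_mul_mod_self_right, Nat.mod_eq_of_lt hℓ,
    Nat.mod_eq_of_lt hℓ', Nat.zero_add] at hdiv hmod
  exact ⟨hdiv, hmod⟩

theorem Fin.mul_add_add_one_le {k N : ℕ} (j : Fin k) (ℓ : Fin N) :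
    (j : ℕ) * N + ℓ + 1 ≤ k * N := by
  have := Nat.mul_le_mul_right N (Nat.succ_le_of_lt j.isLt)
  rw [Nat.succ_mul] at this
  omega

section DVertex

variable {k N : ℕ} (G : SimpleGraph (Fin N)) [DecidableRel G.Adj]

theorem vNode_eq_or (i j : Fin k) (q ℓ : Fin N) :
    vNode G i j q ℓ = .gridH i j q ℓ ∨ vNode G i j q ℓ = .gridV i j q ℓ := by
  unfold vNode
  split_ifs <;> simp

theorem vNode_inj {i i' j j' : Fin k} {q q' ℓ ℓ' : Fin N} :
    vNode G i j q ℓ = vNode G i' j' q' ℓ' ↔ i = i' ∧ j = j' ∧ q = q' ∧ ℓ = ℓ' := by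
  refine ⟨fun h => ?_, by rintro ⟨rfl, rfl, rfl, rfl⟩; rfl⟩
  rcases vNode_eq_or G i j q ℓ with h₁ | h₁ <;> rcases vNode_eq_or G i' j' q' ℓ' with h₂ | h₂ <;>
    simp_all

theorem vNode_ne_a {i i' j : Fin k} {q ℓ : Fin N} : vNode G i j q ℓ ≠ .a i' := by
  rcases vNode_eq_or G i j q ℓ with h | h <;> simp [h]

theorem vNode_ne_c {i j j' : Fin k} {q ℓ : Fin N} : vNode G i j q ℓ ≠ .c j' := by
  rcases vNode_eq_or G i j q ℓ with h | h <;> simp [h]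

theorem split_of_vNode_ne_gridH {i j : Fin k} {q ℓ : Fin N}
    (h : vNode G i j q ℓ ≠ .gridH i j q ℓ) : Split G i j q ℓ := by
  by_contra hs
  exact h (if_neg hs)

omit [DecidableRel G.Adj] in
theorem split_comm {i j : Fin k} {q ℓ : Fin N} : Split G i j q ℓ ↔ Split G j i ℓ q := by
  unfold Split
  rw [G.adj_comm, ne_comm, eq_comm (a := i), eq_comm (a := q)]

/-- Position along the `a_i ⇝ b_i` direction. The values at `c_j` and `d_j` are arbitrary,
subject to no edge raising the height by more than one. -/
def vHeight (k N : ℕ) : DVertV k N → ℕ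
  | .gridH _ j _ ℓ | .gridV _ j _ ℓ => j * N + ℓ + 1
  | .a _ | .d _ => 0
  | .b _ | .c _ => k * N + 1

omit [DecidableRel G.Adj] in
theorem vHeight_le (v : DVertV k N) : vHeight k N v ≤ k * N + 1 := by
  cases v with
  | gridH _ j _ ℓ | gridV _ j _ ℓ => exact (Fin.mul_add_add_one_le j ℓ).trans (Nat.le_succ _)
  | a | b | c | d => simp [vHeight]

theorem vHeight_vNode (i j : Fin k) (q ℓ : Fin N) :
    vHeight k N (vNode G i j q ℓ) = j * N + ℓ + 1 := by
  rcases vNode_eq_or G i j q ℓ with h | h <;> rw [h] <;> rfl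

theorem vHeight_le_of_DVertE {v w : DVertV k N} (h : DVertE k N G v w) :
    vHeight k N w ≤ vHeight k N v + 1 := by
  cases h with
  | up i j q ℓ ℓ' h => simp only [vHeight_vNode]; omega
  | vmatch i j j' q ℓ ℓ' hj hl hl' => simp only [vHeight_vNode, hj, hl', Nat.succ_mul]; omega
  | srcA i j q ℓ hj hl =>
    rw [vHeight_vNode, hj, hl]
    simp [vHeight]
  | snkB i j q ℓ hj hl =>
    rw [vHeight_vNode]
    show k * N + 1 ≤ _
    have := congrArg (· * N) hj
    simp only [add_one_mul] at this
    omega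
  | srcC i j q ℓ hi hq => exact (vHeight_le _).trans (Nat.le_succ _)
  | right | hmatch | snkD => simp [vHeight]

theorem DVertE.eq_b_or_vNode_of_height {v w : DVertV k N} (h : DVertE k N G v w)
    {i j : Fin k} {q ℓ : Fin N} (hv : v = vNode G i j q ℓ)
    (hw : vHeight k N w = vHeight k N v + 1) : w = .b i ∨ ∃ j' ℓ', w = vNode G i j' q ℓ' := by
  cases h with
  | up i' j' q' ℓ₀ ℓ' _ =>
    obtain ⟨rfl, -, rfl, -⟩ := (vNode_inj G).mp hv
    exact .inr ⟨j', ℓ', rfl⟩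
  | vmatch i' j₀ j' q' ℓ₀ ℓ' _ _ _ =>
    obtain ⟨rfl, -, rfl, -⟩ := (vNode_inj G).mp hv
    exact .inr ⟨j', ℓ', rfl⟩
  | snkB i' j' q' ℓ' _ _ =>
    obtain ⟨rfl, -⟩ := (vNode_inj G).mp hv
    exact .inl rfl
  | srcA => exact absurd hv.symm (vNode_ne_a G)
  | srcC => exact absurd hv.symm (vNode_ne_c G)
  | right | hmatch | snkD => simp [vHeight] at hw

theorem DVertE.eq_vNode_of_a {i : Fin k} {v w : DVertV k N} (h : DVertE k N G v w)
    (hv : v = .a i) : ∃ j q ℓ, w = vNode G i j q ℓ := by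
  cases h with
  | srcA i' j q ℓ _ _ =>
    obtain rfl : i' = i := by simpa using hv
    exact ⟨j, q, ℓ, rfl⟩
  | up | vmatch | snkB => exact absurd hv (vNode_ne_a G)
  | right | hmatch | srcC | snkD => simp at hv

theorem DVertE.vNode_of_height_succ (i : Fin k) (q : Fin N) {j j' : Fin k} {ℓ ℓ' : Fin N}
    (h : (j' : ℕ) * N + ℓ' = j * N + ℓ + 1) :
    DVertE k N G (vNode G i j q ℓ) (vNode G i j' q ℓ') := by
  by_cases hℓ : (ℓ : ℕ) + 1 < N
  · obtain ⟨hj, hℓ'⟩ := Nat.eq_and_eq_of_mul_add_eq ℓ'.isLt hℓ (h.trans (Nat.add_assoc _ _ _))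
    rw [Fin.ext hj]
    exact .up i j q ℓ ℓ' hℓ'
  · have hℓN : (ℓ : ℕ) + 1 = N := by omega
    have h' : (j' : ℕ) * N + ℓ' = (j + 1) * N + 0 := by rw [h, Nat.succ_mul]; omega
    obtain ⟨hj, hℓ'⟩ := Nat.eq_and_eq_of_mul_add_eq ℓ'.isLt (by omega) h'
    exact .vmatch i j j' q ℓ ℓ' hj hℓN hℓ'

theorem DVertE.vNode_b_of_height (i j : Fin k) (q ℓ : Fin N)
    (h : (j : ℕ) * N + ℓ + 1 = k * N) : DVertE k N G (vNode G i j q ℓ) (.b i) := by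
  have hN : 0 < N := ℓ.pos
  by_cases hℓ : (ℓ : ℕ) + 1 < N
  · have := (Nat.eq_and_eq_of_mul_add_eq hℓ hN (h.trans (Nat.add_zero _).symm)).2
    omega
  · have hℓN : (ℓ : ℕ) + 1 = N := by omega
    have h' : k * N + 0 = (j + 1) * N + 0 := by rw [← h, Nat.succ_mul]; omega
    exact .snkB i j q ℓ (Nat.eq_and_eq_of_mul_add_eq hN hN h').1.symm hℓN

/-- The vertex of `canonVertV G i r` at height `t`. -/
def canonVertSeq (i : Fin k) (r : Fin N) : ℕ → DVertV k N
  | 0 => .a i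
  | t + 1 => if h : t < k * N then vNode G i (Fin.divNat ⟨t, h⟩) r (Fin.modNat ⟨t, h⟩) else .b i

theorem vHeight_canonVertSeq (i : Fin k) (r : Fin N) {t : ℕ} (ht : t ≤ k * N + 1) :
    vHeight k N (canonVertSeq G i r t) = t := by
  cases t with
  | zero => rfl
  | succ t =>
    by_cases h : t < k * N
    · rw [canonVertSeq, dif_pos h, vHeight_vNode, Fin.coe_divNat, Fin.coe_modNat,
        Nat.div_add_mod']
    · rw [canonVertSeq, dif_neg h]
      show k * N + 1 = t + 1
      omega

theorem DVertE.canonVertSeq_step (i : Fin k) (r : Fin N) {t : ℕ} (ht : t ≤ k * N) :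
    DVertE k N G (canonVertSeq G i r t) (canonVertSeq G i r (t + 1)) := by
  have hkN : 0 < k * N := Nat.mul_pos i.pos r.pos
  cases t with
  | zero =>
    rw [canonVertSeq, canonVertSeq, dif_pos hkN]
    exact .srcA i _ r _ (by simp [Fin.coe_divNat]) (by simp [Fin.coe_modNat])
  | succ t =>
    rw [canonVertSeq, canonVertSeq, dif_pos (by omega : t < k * N)]
    by_cases h : t + 1 < k * N
    · rw [dif_pos h]
      apply DVertE.vNode_of_height_succ
      simp only [Fin.coe_divNat, Fin.coe_modNat, Nat.div_add_mod']
    · rw [dif_neg h]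
      apply DVertE.vNode_b_of_height
      simp only [Fin.coe_divNat, Fin.coe_modNat, Nat.div_add_mod']
      omega

theorem exists_isPathList_a_b (i : Fin k) (r : Fin N) :
    ∃ l, IsPathList (DVertE k N G) (.a i) (.b i) l ∧ l.length = k * N + 2 := by
  refine ⟨(List.range (k * N + 2)).map (canonVertSeq G i r),
    isPathList_of_isChain_succ (vHeight k N) ?_ ?_ ?_, by simp⟩
  · refine (List.isChain_map _).mpr ((List.isChain_range_succ _ _).mpr fun t ht => ?_)
    refine ⟨DVertE.canonVertSeq_step G i r (by omega), ?_⟩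
    rw [vHeight_canonVertSeq G i r (by omega), vHeight_canonVertSeq G i r (by omega)]
  · simp [List.head?_range, canonVertSeq]
  · simp [List.getLast?_range, canonVertSeq]

theorem IsShortestDirPath.exists_row {i : Fin k} {p : List (DVertV k N)}
    (hp : IsShortestDirPath (DVertE k N G) (.a i) (.b i) p) :
    ∃ r, ∀ j ℓ, vNode G i j r ℓ ∈ p := by
  obtain ⟨hpath, hmin⟩ := hp
  obtain ⟨w, rest, rfl⟩ : ∃ w rest, p = .a i :: w :: rest := by
    match p, hpath.head, hpath.last with
    | [_], rfl, h => simp at h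
    | _ :: w :: rest, h, _ => exact ⟨w, rest, by simpa using h⟩
  have hchain : (DVertV.a i :: w :: rest).IsChain (DVertE k N G) := hpath.chain
  obtain ⟨j₀, r, ℓ₀, hw⟩ := (List.isChain_cons_cons.mp hchain).1.eq_vNode_of_a G rfl
  obtain ⟨l, hl, hlen⟩ := exists_isPathList_a_b G i r
  have htight := isChain_succ_of_length_le (vHeight k N) (fun _ _ => vHeight_le_of_DVertE G)
    hchain hpath.head hpath.last (by have := hmin l hl; simp only [vHeight]; omega)
  have hstep : ∀ v w, DVertE k N G v w ∧ vHeight k N w = vHeight k N v + 1 →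
      (v = .b i ∨ ∃ j ℓ, v = vNode G i j r ℓ) → w = .b i ∨ ∃ j ℓ, w = vNode G i j r ℓ := by
    rintro v w ⟨hvw, hh⟩ (rfl | ⟨j, ℓ, rfl⟩)
    · have := vHeight_le w
      rw [show vHeight k N (.b i) = k * N + 1 from rfl] at hh
      omega
    · exact hvw.eq_b_or_vNode_of_height G rfl hh
  have hrow : ∀ v ∈ w :: rest, v = .b i ∨ ∃ j ℓ, v = vNode G i j r ℓ :=
    (List.isChain_cons_cons.mp htight).2.induction _ _ hstep fun _ => .inr ⟨j₀, ℓ₀, hw⟩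
  refine ⟨r, fun j ℓ => ?_⟩
  have hjℓ := Fin.mul_add_add_one_le j ℓ
  obtain ⟨v, hv, hvh⟩ := exists_mem_eq_of_isChain_succ (vHeight k N)
    (htight.imp fun _ _ => And.right) hpath.head hpath.last (j * N + ℓ + 1) (Nat.zero_le _)
    (by simp only [vHeight]; omega)
  rcases List.mem_cons.mp hv with rfl | hv'
  · simp [vHeight] at hvh
  rcases hrow v hv' with rfl | ⟨j', ℓ', rfl⟩
  · simp only [vHeight] at hvh
    omega
  · rw [vHeight_vNode] at hvh
    obtain ⟨hj, hℓ⟩ := Nat.eq_and_eq_of_mul_add_eq (j := j') (j' := j) ℓ'.isLt ℓ.isLt (by omega)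
    rwa [Fin.ext hj, Fin.ext hℓ] at hv

/-- Reflection in the diagonal of the grid: it swaps `w_Hor` with `w_Ver`, horizontal with
vertical edges and `(a, b)` with `(c, d)`. Since `S_{j,i}` is the transpose of `S_{i,j}`,
it is an automorphism of `D_vertex`. -/
def vTranspose : DVertV k N → DVertV k N
  | .gridH i j q ℓ => vNode G j i ℓ q
  | .gridV i j q ℓ => if Split G j i ℓ q then .gridH j i ℓ q else .gridV j i ℓ q
  | .a i => .c i
  | .b i => .d i
  | .c j => .a j
  | .d j => .b j

theorem vTranspose_vNode (i j : Fin k) (q ℓ : Fin N) :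
    vTranspose G (vNode G i j q ℓ) = .gridH j i ℓ q := by
  unfold vNode
  split_ifs with h
  · simp [vTranspose, (split_comm G).mp h]
  · simp [vTranspose, vNode, mt (split_comm G).mpr h]

theorem vTranspose_involutive : Function.Involutive (vTranspose (k := k) G) := by
  intro v
  cases v with
  | gridH i j q ℓ => exact vTranspose_vNode G j i ℓ q
  | gridV i j q ℓ =>
    by_cases h : Split G j i ℓ q
    · simp [vTranspose, vNode, h, (split_comm G).mpr h]
    · simp [vTranspose, h, mt (split_comm G).mp h]
  | a | b | c | d => rfl

theorem DVertE.vTranspose {v w : DVertV k N} (h : DVertE k N G v w) :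
    DVertE k N G (vTranspose G v) (vTranspose G w) := by
  cases h with
  | up i j q ℓ ℓ' h =>
    rw [vTranspose_vNode, vTranspose_vNode]
    exact .right j i ℓ ℓ' q h
  | right i j q q' ℓ h => exact .up j i ℓ q q' h
  | hmatch i i' j q q' ℓ hi hq hq' => exact .vmatch j i i' ℓ q q' hi hq hq'
  | vmatch i j j' q ℓ ℓ' hj hl hl' =>
    rw [vTranspose_vNode, vTranspose_vNode]
    exact .hmatch j j' i ℓ ℓ' q hj hl hl'
  | srcA i j q ℓ hj hl =>
    rw [vTranspose_vNode]
    exact .srcC j i ℓ q hj hl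
  | snkB i j q ℓ hj hl =>
    rw [vTranspose_vNode]
    exact .snkD j i ℓ q hj hl
  | srcC i j q ℓ hi hq => exact .srcA j i ℓ q hi hq
  | snkD i j q ℓ hi hq => exact .snkB j i ℓ q hi hq

theorem IsShortestDirPath.exists_col {j : Fin k} {p : List (DVertV k N)}
    (hp : IsShortestDirPath (DVertE k N G) (.c j) (.d j) p) :
    ∃ c, ∀ i q, DVertV.gridH i j q c ∈ p := by
  obtain ⟨c, hc⟩ := IsShortestDirPath.exists_row G
    (hp.map_of_involutive (vTranspose_involutive G) fun _ _ h => h.vTranspose G)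
  refine ⟨c, fun i q => ?_⟩
  rw [← List.mem_map_of_injective (vTranspose_involutive G).injective]
  exact hc i q

theorem split_of_vertDisj {i j : Fin k} {q ℓ : Fin N} {p p' : List (DVertV k N)}
    (hd : VertDisj p p') (h : vNode G i j q ℓ ∈ p) (h' : .gridH i j q ℓ ∈ p') :
    Split G i j q ℓ :=
  split_of_vNode_ne_gridH G fun heq => hd _ h (heq ▸ h')

end DVertex

theorem exists_clique_of_split {k N : ℕ} (G : SimpleGraph (Fin N))
    (SAT : Finset (Fin k ⊕ Fin k)) (r c : Fin k → Fin N)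
    (h : ∀ i j, .inl i ∈ SAT → .inr j ∈ SAT → Split G i j (r i) (c j)) :
    ∃ Z : Finset (Fin N), SAT.card ≤ k + Z.card ∧ ∀ u ∈ Z, ∀ v ∈ Z, u ≠ v → G.Adj u v := by
  set S := SAT.toLeft ∩ SAT.toRight
  have hS {i} (hi : i ∈ S) : .inl i ∈ SAT ∧ .inr i ∈ SAT := by
    simpa [S] using hi
  have hdiag {i} (hi : i ∈ S) : r i = c i := by
    rcases h i i (hS hi).1 (hS hi).2 with ⟨-, h⟩ | ⟨h, -⟩
    exacts [h, absurd rfl h]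
  have hadj {i j} (hi : i ∈ S) (hj : j ∈ S) (hij : i ≠ j) : G.Adj (r i) (r j) := by
    rcases h i j (hS hi).1 (hS hj).2 with ⟨h, -⟩ | ⟨-, h⟩
    exacts [absurd h hij, hdiag hj ▸ h]
  refine ⟨S.image r, ?_, ?_⟩
  · rw [Finset.card_image_of_injOn fun i hi j hj hij =>
      by_contra fun hne => G.ne_of_adj (hadj hi hj hne) hij]
    have hunion : (SAT.toLeft ∪ SAT.toRight).card + S.card = SAT.toLeft.card + SAT.toRight.card :=
      Finset.card_union_add_card_inter _ _
    have hk : (SAT.toLeft ∪ SAT.toRight).card ≤ k :=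
      (Finset.card_le_univ _).trans_eq (Fintype.card_fin k)
    have := SAT.card_toLeft_add_card_toRight
    omega
  · simp only [Finset.mem_image]
    rintro _ ⟨i, hi, rfl⟩ _ ⟨j, hj, rfl⟩ hne
    exact hadj hi hj (ne_of_apply_ne r hne)

theorem DVert_soundness_general (N k : ℕ) (hN : 1 ≤ N)
    (G : SimpleGraph (Fin N)) [DecidableRel G.Adj]
    (ε : ℝ)
    (SAT : Finset (Fin k ⊕ Fin k)) (P : Fin k ⊕ Fin k → List (DVertV k N))
    (hcard : (1 / 2 + ε) * (2 * k) ≤ (SAT.card : ℝ))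
    (hshort : ∀ x ∈ SAT, IsShortestDirPath (DVertE k N G) (vSrc x) (vDst x) (P x))
    (hdisj : ∀ x ∈ SAT, ∀ y ∈ SAT, x ≠ y → VertDisj (P x) (P y)) :
    ∃ Z : Finset (Fin N),
      2 * ε * k ≤ (Z.card : ℝ) ∧ ∀ u ∈ Z, ∀ v ∈ Z, u ≠ v → G.Adj u v := by
  have : NeZero N := ⟨by omega⟩
  choose! r hr using fun i (hi : .inl i ∈ SAT) => (hshort _ hi).exists_row G
  choose! c hc using fun j (hj : .inr j ∈ SAT) => (hshort _ hj).exists_col G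
  obtain ⟨Z, hZ, hclique⟩ := exists_clique_of_split G SAT r c fun i j hi hj =>
    split_of_vertDisj G (hdisj _ hi _ hj Sum.inl_ne_inr) (hr i hi j (c j)) (hc j hj i (r i))
  refine ⟨Z, ?_, hclique⟩
  have : (SAT.card : ℝ) ≤ k + Z.card := by exact_mod_cast hZ
  linarith

/-- let `0 < ε ≤ 1/2`. If there is a collection `P` of pairwise
vertex-disjoint directed paths in `D_vertex` such that for at least `(1/2 + ε)·2k` of
the `2k` terminal pairs `(s,t) ∈ T` the collection contains a shortest `s⇝t` path, then
`G` contains a clique of size at least `2εk`. -/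
theorem DVert_soundness (N k : ℕ) (hN : 1 ≤ N) (hk : 1 ≤ k)
    (G : SimpleGraph (Fin N)) [DecidableRel G.Adj]
    (ε : ℝ) (hε0 : 0 < ε) (hε : ε ≤ 1 / 2)
    (SAT : Finset (Fin k ⊕ Fin k)) (P : Fin k ⊕ Fin k → List (DVertV k N))
    (hcard : (1 / 2 + ε) * (2 * k) ≤ (SAT.card : ℝ))
    (hshort : ∀ x ∈ SAT, IsShortestDirPath (DVertE k N G) (vSrc x) (vDst x) (P x))
    (hdisj : ∀ x ∈ SAT, ∀ y ∈ SAT, x ≠ y → VertDisj (P x) (P y)) :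
    ∃ Z : Finset (Fin N),
      2 * ε * k ≤ (Z.card : ℝ) ∧ ∀ u ∈ Z, ∀ v ∈ Z, u ≠ v → G.Adj u v :=
  DVert_soundness_general N k hN G ε SAT P hcard hshort hdisj
end

section
/- For every j ∈ [k]: every path from c_j to d_j in U_int has cost at least 5kN, and for each r ∈ [N] the horizontal canonical path Canonical(r; c_j–d_j) has cost exactly 5kN; hence each Canonical(r; c_j–d_j) is a shortest (minimum-cost) c_j–d_j path in U_int. -/
/-- The vertices of the intermediate graph `D_int` (also the vertex set of `U_int`):
grid vertices `w_{i,j}^{q,ℓ}` (`grid i j q ℓ`, with `q` the column and `ℓ` the row,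
indices `0`-based) and terminal vertices `a i`, `b i`, `c j`, `d j`. -/
inductive DIntV (k N : ℕ) where
  | grid (i j : Fin k) (q ℓ : Fin N)
  | a (i : Fin k)
  | b (i : Fin k)
  | c (j : Fin k)
  | d (j : Fin k)
  deriving DecidableEq, Fintype

/-- The directed edges of `D_int`. -/
inductive DIntE (k N : ℕ) : DIntV k N → DIntV k N → Prop where
  /-- `w_{i,j}^{q,ℓ} → w_{i,j}^{q,ℓ+1}` for `ℓ < N` -/
  | up (i j : Fin k) (q ℓ ℓ' : Fin N) (h : (ℓ' : ℕ) = (ℓ : ℕ) + 1) :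
      DIntE k N (.grid i j q ℓ) (.grid i j q ℓ')
  /-- `w_{i,j}^{q,ℓ} → w_{i,j}^{q+1,ℓ}` for `q < N` -/
  | right (i j : Fin k) (q q' ℓ : Fin N) (h : (q' : ℕ) = (q : ℕ) + 1) :
      DIntE k N (.grid i j q ℓ) (.grid i j q' ℓ)
  /-- `w_{i,j}^{N,ℓ} → w_{i+1,j}^{1,ℓ}` for `i < k` -/
  | hmatch (i i' j : Fin k) (q q' ℓ : Fin N)
      (hi : (i' : ℕ) = (i : ℕ) + 1) (hq : (q : ℕ) + 1 = N) (hq' : (q' : ℕ) = 0) :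
      DIntE k N (.grid i j q ℓ) (.grid i' j q' ℓ)
  /-- `w_{i,j}^{ℓ,N} → w_{i,j+1}^{ℓ,1}` for `j < k` -/
  | vmatch (i j j' : Fin k) (q ℓ ℓ' : Fin N)
      (hj : (j' : ℕ) = (j : ℕ) + 1) (hl : (ℓ : ℕ) + 1 = N) (hl' : (ℓ' : ℕ) = 0) :
      DIntE k N (.grid i j q ℓ) (.grid i j' q ℓ')
  /-- `a_i → w_{i,1}^{q,1}` for all `q ∈ [N]` -/
  | srcA (i j : Fin k) (q ℓ : Fin N) (hj : (j : ℕ) = 0) (hl : (ℓ : ℕ) = 0) :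
      DIntE k N (.a i) (.grid i j q ℓ)
  /-- `w_{i,k}^{q,N} → b_i` for all `q ∈ [N]` -/
  | snkB (i j : Fin k) (q ℓ : Fin N) (hj : (j : ℕ) + 1 = k) (hl : (ℓ : ℕ) + 1 = N) :
      DIntE k N (.grid i j q ℓ) (.b i)
  /-- `c_j → w_{1,j}^{1,ℓ}` for all `ℓ ∈ [N]` -/
  | srcC (i j : Fin k) (q ℓ : Fin N) (hi : (i : ℕ) = 0) (hq : (q : ℕ) = 0) :
      DIntE k N (.c j) (.grid i j q ℓ)
  /-- `w_{k,j}^{N,ℓ} → d_j` for all `ℓ ∈ [N]` -/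
  | snkD (i j : Fin k) (q ℓ : Fin N) (hi : (i : ℕ) + 1 = k) (hq : (q : ℕ) + 1 = N) :
      DIntE k N (.grid i j q ℓ) (.d j)

/-- The horizontal canonical path `Canonical(r; c_j ⇝ d_j)`, as the list of its
vertices : `c_j`, then row `r` of the grids `D_{1,j}, …, D_{k,j}` from left to right,
then `d_j`. -/
def canonH (k N : ℕ) (j : Fin k) (r : Fin N) : List (DIntV k N) :=
  DIntV.c j ::
    (((List.finRange k).flatMap fun i =>
        (List.finRange N).map fun q => DIntV.grid i j q r) ++ [DIntV.d j])

/-- The vertical canonical path `Canonical(r; a_i ⇝ b_i)`, as the list of its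
vertices : `a_i`, then column `r` of the grids `D_{i,1}, …, D_{i,k}` from bottom to top,
then `b_i`. -/
def canonV (k N : ℕ) (i : Fin k) (r : Fin N) : List (DIntV k N) :=
  DIntV.a i ::
    (((List.finRange k).flatMap fun j =>
        (List.finRange N).map fun ℓ => DIntV.grid i j r ℓ) ++ [DIntV.b i])
/-- The adjacency relation of the undirected graph `U_int`: the symmetrization of the
edges of `D_int` (i.e. the same grid, matching and terminal edges, undirected). -/
def UIntAdj (k N : ℕ) : DIntV k N → DIntV k N → Prop := UAdj (DIntE k N)

/-- The vertex costs in `U_int`: each grid (black) vertex has cost `1`, and each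
terminal (green) vertex has cost `2kN`. -/
def costInt (k N : ℕ) : DIntV k N → ℕ
  | .grid _ _ _ _ => 1
  | _ => 2 * k * N

/-!
A `c_j`–`d_j` path pays `2kN` for each of its two ends. If it also visits some `a_i` or
`b_i`, it pays at least `6kN`. Otherwise each of its edges changes the global column
(`c_j` at `-1`, `w_{i,j}^{q,ℓ}` at `(i-1)N + q - 1`, `d_j` at `kN`) by at most one, so by a
discrete intermediate value argument the path meets each of the `kN` columns `0, …, kN-1`
in a grid vertex, which adds at least `kN`. The canonical path meets each column exactly once.
-/

open Finset

namespace List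

theorem IsChain.mem_of_head_le_of_le_getLast {l : List ℤ}
    (hl : l.IsChain fun a b => b ≤ a + 1) {x y m : ℤ} (hx : l.head? = some x)
    (hy : l.getLast? = some y) (hxm : x ≤ m) (hmy : m ≤ y) : m ∈ l := by
  induction l generalizing x with
  | nil => simp at hx
  | cons a t ih =>
    obtain rfl : a = x := by simpa using hx
    rcases hxm.eq_or_lt with rfl | hlt
    · exact mem_cons_self
    cases t with
    | nil => simp at hy; omega
    | cons b t =>
      rw [isChain_cons_cons] at hl
      exact mem_cons_of_mem _ (ih hl.2 rfl (by simpa using hy) (by omega))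

theorem head?_finRange_succ (n : ℕ) : (finRange (n + 1)).head? = some 0 := by
  simp [finRange_succ]

theorem getLast?_finRange_succ (n : ℕ) : (finRange (n + 1)).getLast? = some (Fin.last n) := by
  simp [finRange_succ_last]

theorem isChain_finRange {n : ℕ} {R : Fin n → Fin n → Prop}
    (h : ∀ a b : Fin n, (b : ℕ) = a + 1 → R a b) : (finRange n).IsChain R := by
  refine isChain_of_isChain_map Fin.val (S := fun a b => b = a + 1) (fun a b => h a b) ?_
  rw [map_coe_finRange_eq_range, isChain_range]
  exact fun _ _ => rfl

end List

namespace DIntV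

variable {k N : ℕ}

/-- The column along the rows of `U_{1,j}, …, U_{k,j}`; the values at `a i`, `b i` are arbitrary. -/
def col : DIntV k N → ℤ
  | grid i _ q _ => i * N + q
  | c _ => -1
  | d _ => k * N
  | a _ | b _ => 0

def IsVertTerminal : DIntV k N → Prop
  | a _ | b _ => True
  | _ => False

def isGrid : DIntV k N → Bool
  | grid .. => true
  | _ => false

theorem costInt_eq_ite (v : DIntV k N) :
    costInt k N v = if v.isGrid then 1 else 2 * k * N := by
  cases v <;> rfl

theorem col_le_col_and_le_col_add_one {x y : DIntV k N} (h : DIntE k N x y)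
    (hx : ¬ x.IsVertTerminal) (hy : ¬ y.IsVertTerminal) :
    x.col ≤ y.col ∧ y.col ≤ x.col + 1 := by
  cases h with
  | srcA | snkB => simp [IsVertTerminal] at hx hy
  | hmatch i i' j q q' ℓ hi hq hq' =>
    have hN : (N : ℤ) = q + 1 := by omega
    simp only [col, hi, hq', hN]; push_cast; constructor <;> linarith
  | snkD i j q ℓ hi hq =>
    have hN : (N : ℤ) = q + 1 := by omega
    simp only [col, ← hi, hN]; push_cast; constructor <;> linarith
  | srcC i j q ℓ hi hq => simp [col, hi, hq]
  | _ => simp only [col]; omega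

theorem col_le_col_add_one_of_uAdj {x y : DIntV k N} (h : UAdj (DIntE k N) x y)
    (hx : ¬ x.IsVertTerminal) (hy : ¬ y.IsVertTerminal) : y.col ≤ x.col + 1 := by
  rcases h with h | h
  · exact (col_le_col_and_le_col_add_one h hx hy).2
  · linarith [(col_le_col_and_le_col_add_one h hy hx).1]

end DIntV

section

open DIntV

variable {k N : ℕ}

theorem pathCost_costInt_eq {p : List (DIntV k N)} (hp : p.Nodup) :
    pathCost (costInt k N) p =
      #{v ∈ p.toFinset | v.isGrid} + 2 * k * N * #{v ∈ p.toFinset | ¬ v.isGrid} := by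
  simp_rw [pathCost, ← List.sum_toFinset _ hp, costInt_eq_ite, sum_ite, sum_const, smul_eq_mul,
    mul_one, mul_comm]

theorem le_card_grid_of_forall_not_isVertTerminal {j : Fin k} {p : List (DIntV k N)}
    (hp : IsPathList (UIntAdj k N) (c j) (d j) p) (hav : ∀ v ∈ p, ¬ v.IsVertTerminal) :
    k * N ≤ #{v ∈ p.toFinset | v.isGrid} := by
  have hchain : (p.map col).IsChain fun a b => b ≤ a + 1 :=
    (List.isChain_map col).2 <| hp.chain.imp_of_mem_imp fun x y hx hy hxy =>
      col_le_col_add_one_of_uAdj hxy (hav x hx) (hav y hy)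
  have hsurj : Set.SurjOn col (({v ∈ p.toFinset | v.isGrid} : Finset (DIntV k N)) : Set (DIntV k N))
      (Icc 0 (k * N - 1 : ℤ) : Set ℤ) := by
    intro m hm
    rw [coe_Icc, Set.mem_Icc] at hm
    have hm' : m ∈ p.map col := hchain.mem_of_head_le_of_le_getLast (x := -1) (y := k * N)
      (by simp [List.head?_map, hp.head, col]) (by simp [List.getLast?_map, hp.last, col])
      (by omega) (by omega)
    obtain ⟨v, hv, rfl⟩ := List.mem_map.1 hm'
    refine ⟨v, mem_filter.2 ⟨List.mem_toFinset.2 hv, ?_⟩, rfl⟩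
    have hnv := hav v hv
    cases v <;> simp_all [col, isGrid, IsVertTerminal]
  have hcard := card_le_card_of_surjOn col hsurj
  rw [Int.card_Icc, sub_add_cancel, sub_zero] at hcard
  exact_mod_cast hcard

theorem five_mul_le_pathCost {j : Fin k} {p : List (DIntV k N)}
    (hp : IsPathList (UIntAdj k N) (c j) (d j) p) : 5 * k * N ≤ pathCost (costInt k N) p := by
  have hc : c j ∈ p := List.mem_of_mem_head? hp.head
  have hd : d j ∈ p := List.mem_of_mem_getLast? hp.last
  rw [pathCost_costInt_eq hp.nodup]
  by_cases hav : ∀ v ∈ p, ¬ v.IsVertTerminal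
  · have hT : 2 ≤ #{v ∈ p.toFinset | ¬ v.isGrid} := by
      rw [← card_pair (show c j ≠ d j by simp)]
      refine card_le_card fun v hv => ?_
      rcases mem_insert.1 hv with rfl | hv
      · simpa [isGrid] using hc
      · rw [mem_singleton.1 hv]; simpa [isGrid] using hd
    have hG := le_card_grid_of_forall_not_isVertTerminal hp hav
    have := Nat.mul_le_mul_left (2 * k * N) hT
    nlinarith
  · push Not at hav
    obtain ⟨v, hv, hvt⟩ := hav
    have hvc : c j ≠ v := by rintro rfl; exact hvt
    have hvd : d j ≠ v := by rintro rfl; exact hvt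
    have hvg : ¬ v.isGrid := by cases v <;> simp_all [IsVertTerminal, isGrid]
    have hT : 3 ≤ #{v ∈ p.toFinset | ¬ v.isGrid} := by
      rw [← card_eq_three.2 ⟨c j, d j, v, by simp, hvc, hvd, rfl⟩]
      refine card_le_card fun w hw => ?_
      simp only [mem_insert, mem_singleton] at hw
      rcases hw with rfl | rfl | rfl <;> simp_all [isGrid]
    have := Nat.mul_le_mul_left (2 * k * N) hT
    nlinarith

theorem pathCost_canonH (j : Fin k) (r : Fin N) :
    pathCost (costInt k N) (canonH k N j r) = 5 * k * N := by
  simp [pathCost, canonH, costInt, List.flatMap_def, Function.comp_def]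
  ring

theorem canonH_nodup (j : Fin k) (r : Fin N) : (canonH k N j r).Nodup := by
  have hrow (i : Fin k) : ((List.finRange N).map fun q => grid i j q r).Nodup :=
    (List.nodup_finRange N).map fun q q' h => by simpa using h
  simp only [canonH, List.nodup_cons, List.nodup_append, List.nodup_flatMap, List.mem_append,
    List.mem_flatMap, List.mem_map]
  simp [hrow, List.pairwise_iff_getElem, List.Disjoint, Fin.ext_iff]
  grind

theorem isChain_canonH (j : Fin k) (r : Fin N) :
    (canonH k N j r).IsChain (UAdj (DIntE k N)) := by
  obtain ⟨k, rfl⟩ : ∃ k', k = k' + 1 := ⟨k - 1, by have := j.pos; omega⟩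
  obtain ⟨N, rfl⟩ : ∃ N', N = N' + 1 := ⟨N - 1, by have := r.pos; omega⟩
  set row : Fin (k + 1) → List (DIntV (k + 1) (N + 1)) := fun i =>
    (List.finRange (N + 1)).map fun q => grid i j q r
  have hrow (i : Fin (k + 1)) : (row i).IsChain (UAdj (DIntE _ _)) :=
    (List.isChain_map _).2 <| List.isChain_finRange fun q q' h => Or.inl (.right _ _ _ _ _ h)
  have hrows : ((List.finRange (k + 1)).map row).IsChain
      fun l₁ l₂ => ∀ x ∈ l₁.getLast?, ∀ y ∈ l₂.head?, UAdj (DIntE _ _) x y := by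
    refine (List.isChain_map _).2 <| List.isChain_finRange fun i i' h => ?_
    simp only [row, List.head?_map, List.getLast?_map, List.head?_finRange_succ,
      List.getLast?_finRange_succ, Option.map_some, Option.mem_def, Option.some.injEq,
      forall_eq']
    exact Or.inl (.hmatch _ _ _ _ _ _ h rfl rfl)
  have hL : ((List.finRange (k + 1)).map row).flatten.IsChain (UAdj (DIntE _ _)) :=
    (List.isChain_flatten (by simp [row])).2 ⟨by simpa using hrow, hrows⟩
  rw [canonH, List.isChain_cons, List.isChain_append]
  refine ⟨?_, by simpa [List.flatMap_def] using hL, .singleton _, ?_⟩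
  · simp [List.finRange_succ]
    exact Or.inl (.srcC _ _ _ _ rfl rfl)
  · simp [List.finRange_succ_last]
    exact Or.inl (.snkD _ _ _ _ rfl rfl)

theorem isPathList_canonH (j : Fin k) (r : Fin N) :
    IsPathList (UAdj (DIntE k N)) (c j) (d j) (canonH k N j r) :=
  ⟨isChain_canonH j r, canonH_nodup j r, rfl, by rw [canonH, ← List.cons_append, List.getLast?_concat]⟩

end

theorem UInt_canonH_shortest_general (N k : ℕ) (j : Fin k) :
    (∀ p : List (DIntV k N),
      IsPathList (UIntAdj k N) (DIntV.c j) (DIntV.d j) p →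
        5 * k * N ≤ pathCost (costInt k N) p) ∧
    (∀ r : Fin N,
      pathCost (costInt k N) (canonH k N j r) = 5 * k * N ∧
      IsShortestCostPath (DIntE k N) (costInt k N) (DIntV.c j) (DIntV.d j)
        (canonH k N j r)) := by
  refine ⟨fun p hp => five_mul_le_pathCost hp, fun r => ⟨pathCost_canonH j r, ?_⟩⟩
  refine ⟨isPathList_canonH j r, fun q hq => ?_⟩
  rw [pathCost_canonH]
  exact five_mul_le_pathCost hq

/-- for every `j ∈ [k]`, every `c_j`–`d_j` path in `U_int` has cost at
least `5kN`, and for each `r ∈ [N]` the horizontal canonical path `Canonical(r; c_j–d_j)`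
has cost exactly `5kN`; hence each `Canonical(r; c_j–d_j)` is a shortest (minimum-cost)
`c_j`–`d_j` path in `U_int`. -/
theorem UInt_canonH_shortest (N k : ℕ) (hN : 1 ≤ N) (hk : 1 ≤ k) (j : Fin k) :
    (∀ p : List (DIntV k N),
      IsPathList (UIntAdj k N) (DIntV.c j) (DIntV.d j) p →
        5 * k * N ≤ pathCost (costInt k N) p) ∧
    (∀ r : Fin N,
      pathCost (costInt k N) (canonH k N j r) = 5 * k * N ∧
      IsShortestCostPath (DIntE k N) (costInt k N) (DIntV.c j) (DIntV.d j)
        (canonH k N j r)) :=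
  UInt_canonH_shortest_general N k j
end

section
/- For every i ∈ [k]: (i) for each r ∈ [N] the vertical canonical path Canonical(r; a_i–b_i) is a shortest (minimum-cost) a_i–b_i path in U_int, with cost exactly 5kN; and (ii) every shortest a_i–b_i path in U_int equals Canonical(ℓ; a_i–b_i) for some ℓ ∈ [N]. -/
/-! Give the grid vertex `w_{i,j}^{q,ℓ}` the level `ℓ + N j` (indices from `0`). Along an edge
of `U_int` between grid vertices the level changes by at most one, and it goes up by one exactly
along the column steps of the vertical canonical paths. An `a_i`–`b_i` path through a third
terminal costs at least `6kN`. Otherwise its interior consists of grid vertices whose levels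
climb from `0` to `kN - 1`, so there are at least `kN` of them and the path costs at least
`4kN + kN = 5kN`, the cost of a canonical path. In the case of equality the interior has exactly
`kN` vertices, the `t`-th one at level `t`; every step then raises the level by one, hence stays
in the column of the first interior vertex, and the path is canonical. -/

theorem Nat.add_mul_eq_add_mul_add_one_iff {N j j' ℓ ℓ' : ℕ} (hℓ : ℓ < N) (hℓ' : ℓ' < N) :
    ℓ' + N * j' = ℓ + N * j + 1 ↔ (j' = j ∧ ℓ' = ℓ + 1) ∨ (j' = j + 1 ∧ ℓ' = 0 ∧ ℓ + 1 = N) := by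
  constructor
  · intro h
    have hj : j ≤ j' := by
      by_contra! hlt
      have := Nat.mul_le_mul_left N (Nat.succ_le_of_lt hlt)
      rw [Nat.mul_succ] at this
      omega
    have hj' : j' ≤ j + 1 := by
      by_contra! hlt
      have := Nat.mul_le_mul_left N (Nat.succ_le_of_lt hlt)
      rw [Nat.mul_succ, Nat.mul_succ] at this
      omega
    obtain rfl | rfl : j' = j ∨ j' = j + 1 := by omega
    · omega
    · rw [Nat.mul_succ] at h
      omega
  · rintro (⟨rfl, rfl⟩ | ⟨rfl, rfl, rfl⟩)
    · omega
    · rw [Nat.mul_succ]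
      omega

theorem List.IsChain.apply_getElem_le_add_sub {α : Type*} {f : α → ℕ} {l : List α}
    (h : l.IsChain fun x y => f y ≤ f x + 1) {s t : ℕ} (hst : s ≤ t) (ht : t < l.length) :
    f l[t] ≤ f l[s] + (t - s) := by
  induction t, hst using Nat.le_induction with
  | base => simp
  | succ t hst ih =>
    have := List.isChain_iff_getElem.1 h t ht
    have := ih (by omega)
    omega

theorem IsPathList.exists_eq_cons_append {V : Type*} {E : V → V → Prop} {s t : V} {p : List V}
    (hp : IsPathList E s t p) (hst : s ≠ t) : ∃ M, p = s :: (M ++ [t]) := by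
  obtain ⟨l, rfl⟩ := List.getLast?_eq_some_iff.1 hp.last
  have hhead := hp.head
  cases l with
  | nil => simp [Ne.symm hst] at hhead
  | cons x M =>
    simp only [List.cons_append, List.head?_cons, Option.some.injEq] at hhead
    exact ⟨M, by rw [hhead, List.cons_append]⟩

theorem le_pathCost_of_mem {V : Type*} {cost : V → ℕ} {p : List V} {v : V} (hv : v ∈ p) :
    cost v ≤ pathCost cost p :=
  List.le_sum_of_mem (List.mem_map_of_mem hv)

namespace DIntV

variable {k N : ℕ}

-- Written `ℓ + N * j` so that it agrees with `finProdFinEquiv (j, ℓ)`.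
def level : DIntV k N → ℕ
  | grid _ j _ ℓ => ℓ + N * j
  | _ => 0

def IsGrid (v : DIntV k N) : Prop := ∃ i j q ℓ, v = grid i j q ℓ

def InColumn (i : Fin k) (r : Fin N) (v : DIntV k N) : Prop := ∃ j ℓ, v = grid i j r ℓ

def columnVertex (i : Fin k) (r : Fin N) (t : Fin (k * N)) : DIntV k N :=
  grid i t.divNat r t.modNat

theorem level_grid (i j : Fin k) (q ℓ : Fin N) :
    (grid i j q ℓ).level = (finProdFinEquiv (j, ℓ) : ℕ) := by
  simp [level]

theorem level_columnVertex (i : Fin k) (r : Fin N) (t : Fin (k * N)) :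
    (columnVertex i r t).level = t := by
  rw [columnVertex, level_grid, ← finProdFinEquiv_symm_apply, Equiv.apply_symm_apply]

theorem columnVertex_eq {i j : Fin k} {r ℓ : Fin N} {t : Fin (k * N)}
    (h : (grid i j r ℓ).level = t) : columnVertex i r t = grid i j r ℓ := by
  rw [level_grid] at h
  obtain rfl : finProdFinEquiv (j, ℓ) = t := Fin.ext h
  have := finProdFinEquiv.symm_apply_apply (j, ℓ)
  rw [finProdFinEquiv_symm_apply, Prod.mk.injEq] at this
  rw [columnVertex, this.1, this.2]

theorem isGrid_columnVertex (i : Fin k) (r : Fin N) (t : Fin (k * N)) :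
    (columnVertex i r t).IsGrid :=
  ⟨_, _, _, _, rfl⟩

theorem level_add_one_eq_mul_iff {i j : Fin k} {q ℓ : Fin N} :
    (grid i j q ℓ).level + 1 = k * N ↔ (j : ℕ) + 1 = k ∧ (ℓ : ℕ) + 1 = N := by
  have key := Nat.add_mul_eq_add_mul_add_one_iff (j := j) (j' := k) ℓ.isLt (ℓ.pos)
  rw [zero_add, mul_comm N k] at key
  rw [level, eq_comm, key]
  omega

theorem costInt_of_isGrid {v : DIntV k N} (h : v.IsGrid) : costInt k N v = 1 := by
  obtain ⟨_, _, _, _, rfl⟩ := h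
  rfl

theorem costInt_of_not_isGrid {v : DIntV k N} (h : ¬ v.IsGrid) : costInt k N v = 2 * k * N := by
  cases v
  · exact absurd ⟨_, _, _, _, rfl⟩ h
  all_goals rfl

end DIntV

namespace DIntE

open DIntV

variable {k N : ℕ}

theorem level_le_of_grid {i j i' j' : Fin k} {q ℓ q' ℓ' : Fin N}
    (h : DIntE k N (grid i j q ℓ) (grid i' j' q' ℓ')) :
    (grid i j q ℓ).level ≤ (grid i' j' q' ℓ').level ∧
      (grid i' j' q' ℓ').level ≤ (grid i j q ℓ).level + 1 := by
  cases h with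
  | up _ _ _ _ _ h => simp only [level]; omega
  | right => simp only [level]; omega
  | hmatch => simp only [level]; omega
  | vmatch _ _ _ _ _ _ hj hl hl' =>
    have := (Nat.add_mul_eq_add_mul_add_one_iff (Fin.isLt _) (Fin.isLt _)).2 (Or.inr ⟨hj, hl', hl⟩)
    simp only [level]
    omega

end DIntE

namespace DIntV

variable {k N : ℕ}

theorem level_le_of_uAdj {u w : DIntV k N} (hu : u.IsGrid) (hw : w.IsGrid)
    (h : UAdj (DIntE k N) u w) : w.level ≤ u.level + 1 := by
  obtain ⟨_, _, _, _, rfl⟩ := hu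
  obtain ⟨_, _, _, _, rfl⟩ := hw
  rcases h with h | h
  · exact (DIntE.level_le_of_grid h).2
  · have := (DIntE.level_le_of_grid h).1
    omega

theorem InColumn.of_uAdj {i : Fin k} {r : Fin N} {u w : DIntV k N} (hu : u.InColumn i r)
    (hw : w.IsGrid) (h : UAdj (DIntE k N) u w) (hl : w.level = u.level + 1) :
    w.InColumn i r := by
  obtain ⟨j, ℓ, rfl⟩ := hu
  obtain ⟨_, _, _, _, rfl⟩ := hw
  rcases h with h | h
  · cases h with
    | up => exact ⟨_, _, rfl⟩
    | right => simp only [level] at hl; omega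
    | hmatch => simp only [level] at hl; omega
    | vmatch => exact ⟨_, _, rfl⟩
  · have := (DIntE.level_le_of_grid h).1
    omega

theorem dIntE_of_level_eq_add_one {i j j' : Fin k} {q ℓ ℓ' : Fin N}
    (h : (grid i j' q ℓ').level = (grid i j q ℓ).level + 1) :
    DIntE k N (grid i j q ℓ) (grid i j' q ℓ') := by
  rcases (Nat.add_mul_eq_add_mul_add_one_iff ℓ.isLt ℓ'.isLt).1 h with ⟨hj, hl⟩ | ⟨hj, hl', hl⟩
  · obtain rfl : j' = j := Fin.ext hj
    exact .up _ _ _ _ _ hl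
  · exact .vmatch _ _ _ _ _ _ hj hl hl'

theorem exists_inColumn_of_uAdj_a {i : Fin k} {v : DIntV k N} (h : UAdj (DIntE k N) (a i) v) :
    ∃ r, v.InColumn i r ∧ v.level = 0 := by
  rcases h with h | h
  · cases h with
    | srcA _ _ r _ hj hl => exact ⟨r, ⟨_, _, rfl⟩, by simp [level, hj, hl]⟩
  · cases h

theorem level_add_one_of_uAdj_b {i : Fin k} {v : DIntV k N} (h : UAdj (DIntE k N) v (b i)) :
    v.level + 1 = k * N := by
  rcases h with h | h
  · cases h with
    | snkB _ _ _ _ hj hl => exact level_add_one_eq_mul_iff.2 ⟨hj, hl⟩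
  · cases h

theorem columnVertex_injective (i : Fin k) (r : Fin N) : Function.Injective (columnVertex i r) :=
  fun s t h => Fin.ext (by rw [← level_columnVertex i r s, h, level_columnVertex])

theorem canonV_eq_ofFn (i : Fin k) (r : Fin N) :
    canonV k N i r = a i :: (List.ofFn (columnVertex i r) ++ [b i]) := by
  rw [List.ofFn_mul]
  simp only [canonV, List.ofFn_eq_map, List.flatMap_def]
  congr! with j _ ℓ _
  exact (columnVertex_eq (by simp only [level]; ring)).symm

theorem isPathList_canonV (i : Fin k) (r : Fin N) :
    IsPathList (UAdj (DIntE k N)) (a i) (b i) (canonV k N i r) where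
  chain := by
    have hkN : 0 < k * N := Nat.mul_pos i.pos r.pos
    have hne : List.ofFn (columnVertex i r) ≠ [] := by simp [hkN.ne']
    change List.IsChain _ _
    rw [canonV_eq_ofFn, List.isChain_cons, List.isChain_append]
    refine ⟨?_, List.isChain_ofFn.2 fun t ht => ?_, List.isChain_singleton _, ?_⟩
    · intro v hv
      rw [List.head?_append, List.head?_eq_some_head hne, List.head_ofFn, Option.some_or,
        Option.mem_some_iff] at hv
      subst hv
      exact Or.inl (.srcA _ _ _ _ (by simp) (by simp))
    · refine Or.inl (dIntE_of_level_eq_add_one ?_)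
      change (columnVertex i r _).level = (columnVertex i r _).level + 1
      simp only [level_columnVertex]
    · intro v hv w hw
      rw [List.getLast?_eq_some_getLast hne, List.getLast_ofFn, Option.mem_some_iff] at hv
      rw [List.head?_cons, Option.mem_some_iff] at hw
      subst hv hw
      have hlast : (columnVertex i r ⟨k * N - 1, by omega⟩).level + 1 = k * N := by
        rw [level_columnVertex, Fin.val_mk]
        omega
      obtain ⟨hj, hl⟩ := level_add_one_eq_mul_iff.1 hlast
      exact Or.inl (.snkB _ _ _ _ hj hl)
  nodup := by
    rw [canonV_eq_ofFn]
    simp [List.nodup_append, List.nodup_ofFn, columnVertex_injective, columnVertex]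
  head := rfl
  last := by rw [canonV_eq_ofFn, ← List.cons_append, List.getLast?_concat]

theorem pathCost_a_cons_append_b (i : Fin k) (M : List (DIntV k N)) :
    pathCost (costInt k N) (a i :: (M ++ [b i])) = pathCost (costInt k N) M + 4 * k * N := by
  simp only [pathCost, List.map_cons, List.map_append, List.sum_cons, List.sum_append,
    List.map_nil, List.sum_nil, costInt]
  ring

theorem pathCost_eq_length {M : List (DIntV k N)} (h : ∀ v ∈ M, v.IsGrid) :
    pathCost (costInt k N) M = M.length := by
  rw [pathCost, List.map_congr_left fun v hv => costInt_of_isGrid (h v hv)]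
  simp

theorem pathCost_canonV (i : Fin k) (r : Fin N) :
    pathCost (costInt k N) (canonV k N i r) = 5 * k * N := by
  rw [canonV_eq_ofFn, pathCost_a_cons_append_b, pathCost_eq_length, List.length_ofFn]
  · ring
  · simp [isGrid_columnVertex]

theorem isChain_level {M : List (DIntV k N)} (hM : M.IsChain (UAdj (DIntE k N)))
    (hgrid : ∀ v ∈ M, v.IsGrid) : M.IsChain fun u w => w.level ≤ u.level + 1 :=
  hM.imp_of_mem_imp fun u w hu hw h => level_le_of_uAdj (hgrid u hu) (hgrid w hw) h

theorem interior_of_isChain {i : Fin k} {M : List (DIntV k N)}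
    (hp : (a i :: (M ++ [b i])).IsChain (UAdj (DIntE k N))) :
    ∃ hM : M ≠ [], M.IsChain (UAdj (DIntE k N)) ∧ (∃ r, (M.head hM).InColumn i r) ∧
      (M.head hM).level = 0 ∧ (M.getLast hM).level + 1 = k * N := by
  rw [List.isChain_cons, List.isChain_append] at hp
  obtain ⟨hfirst, hM, -, hlast⟩ := hp
  cases M with
  | nil => rcases hfirst _ rfl with h | h <;> cases h
  | cons u M =>
    obtain ⟨r, hr, h0⟩ := exists_inColumn_of_uAdj_a (hfirst u rfl)
    exact ⟨List.cons_ne_nil _ _, hM, ⟨r, hr⟩, h0,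
      level_add_one_of_uAdj_b (hlast _ (List.getLast?_eq_some_getLast _) _ rfl)⟩

theorem mul_le_length_of_isChain {i : Fin k} {M : List (DIntV k N)}
    (hp : (a i :: (M ++ [b i])).IsChain (UAdj (DIntE k N))) (hgrid : ∀ v ∈ M, v.IsGrid) :
    k * N ≤ M.length := by
  obtain ⟨hM0, hM, -, h0, hlast⟩ := interior_of_isChain hp
  have hpos : 0 < M.length := List.length_pos_iff.2 hM0
  have := (isChain_level hM hgrid).apply_getElem_le_add_sub (Nat.zero_le (M.length - 1)) (by omega)
  rw [List.head_eq_getElem] at h0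
  rw [List.getLast_eq_getElem] at hlast
  omega

theorem exists_eq_ofFn_columnVertex {i : Fin k} {M : List (DIntV k N)}
    (hp : (a i :: (M ++ [b i])).IsChain (UAdj (DIntE k N))) (hgrid : ∀ v ∈ M, v.IsGrid)
    (hlen : M.length = k * N) : ∃ r, M = List.ofFn (columnVertex i r) := by
  obtain ⟨hM0, hM, ⟨r, hr⟩, h0, hlast⟩ := interior_of_isChain hp
  have hpos : 0 < M.length := List.length_pos_iff.2 hM0
  rw [List.head_eq_getElem] at h0 hr
  rw [List.getLast_eq_getElem] at hlast
  have level_eq : ∀ t (ht : t < M.length), M[t].level = t := fun t ht => by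
    have := (isChain_level hM hgrid).apply_getElem_le_add_sub (Nat.zero_le t) ht
    have := (isChain_level hM hgrid).apply_getElem_le_add_sub (Nat.le_sub_one_of_lt ht) (by omega)
    omega
  have inColumn : ∀ t (ht : t < M.length), M[t].InColumn i r := by
    intro t ht
    induction t with
    | zero => exact hr
    | succ t ih =>
      exact (ih (by omega)).of_uAdj (hgrid _ (List.getElem_mem _))
        (List.isChain_iff_getElem.1 hM t ht) (by rw [level_eq, level_eq])
  refine ⟨r, List.ext_getElem (by simp [hlen]) fun t ht _ => ?_⟩
  obtain ⟨j, ℓ, h⟩ := inColumn t ht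
  rw [List.getElem_ofFn, h, columnVertex_eq (by rw [← h, level_eq])]

theorem five_mul_le_pathCost {i : Fin k} {p : List (DIntV k N)}
    (hp : IsPathList (UAdj (DIntE k N)) (a i) (b i) p) : 5 * k * N ≤ pathCost (costInt k N) p := by
  obtain ⟨M, rfl⟩ := hp.exists_eq_cons_append (by simp)
  rw [pathCost_a_cons_append_b]
  by_cases hgrid : ∀ v ∈ M, v.IsGrid
  · have := mul_le_length_of_isChain hp.chain hgrid
    rw [pathCost_eq_length hgrid]
    linarith
  · obtain ⟨v, hv, hv'⟩ : ∃ v ∈ M, ¬ v.IsGrid := by simpa using hgrid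
    have := le_pathCost_of_mem (cost := costInt k N) hv
    rw [costInt_of_not_isGrid hv'] at this
    linarith

theorem pos_of_isPathList {i : Fin k} {p : List (DIntV k N)}
    (hp : IsPathList (UAdj (DIntE k N)) (a i) (b i) p) : 0 < N := by
  obtain ⟨M, rfl⟩ := hp.exists_eq_cons_append (by simp)
  obtain ⟨-, -, ⟨r, -⟩, -⟩ := interior_of_isChain hp.chain
  exact r.pos

theorem exists_eq_canonV_of_pathCost_le {i : Fin k} {p : List (DIntV k N)}
    (hp : IsPathList (UAdj (DIntE k N)) (a i) (b i) p) (hc : pathCost (costInt k N) p ≤ 5 * k * N) :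
    ∃ r, p = canonV k N i r := by
  have hkN : 0 < k * N := Nat.mul_pos i.pos (pos_of_isPathList hp)
  obtain ⟨M, rfl⟩ := hp.exists_eq_cons_append (by simp)
  rw [pathCost_a_cons_append_b] at hc
  have hgrid : ∀ v ∈ M, v.IsGrid := by
    intro v hv
    by_contra hv'
    have := le_pathCost_of_mem (cost := costInt k N) hv
    rw [costInt_of_not_isGrid hv'] at this
    nlinarith
  have := mul_le_length_of_isChain hp.chain hgrid
  rw [pathCost_eq_length hgrid] at hc
  obtain ⟨r, rfl⟩ := exists_eq_ofFn_columnVertex hp.chain hgrid (by linarith)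
  exact ⟨r, (canonV_eq_ofFn i r).symm⟩

end DIntV

theorem UInt_canonV_shortest_general (N k : ℕ) (i : Fin k) :
    (∀ r : Fin N,
      IsShortestCostPath (DIntE k N) (costInt k N) (DIntV.a i) (DIntV.b i)
        (canonV k N i r) ∧
      pathCost (costInt k N) (canonV k N i r) = 5 * k * N) ∧
    (∀ p : List (DIntV k N),
      IsShortestCostPath (DIntE k N) (costInt k N) (DIntV.a i) (DIntV.b i) p →
      ∃ ℓ : Fin N, p = canonV k N i ℓ) := by
  refine ⟨fun r => ⟨⟨DIntV.isPathList_canonV i r, fun q hq => ?_⟩, DIntV.pathCost_canonV i r⟩,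
    fun p hp => DIntV.exists_eq_canonV_of_pathCost_le hp.1 ?_⟩
  · rw [DIntV.pathCost_canonV]
    exact DIntV.five_mul_le_pathCost hq
  · rw [← DIntV.pathCost_canonV i ⟨0, DIntV.pos_of_isPathList hp.1⟩]
    exact hp.2 _ (DIntV.isPathList_canonV _ _)

/-- for every `i ∈ [k]`: (i) for each `r ∈ [N]` the vertical canonical
path `Canonical(r; a_i–b_i)` is a shortest (minimum-cost) `a_i`–`b_i` path in `U_int`,
with cost exactly `5kN`; and (ii) every shortest `a_i`–`b_i` path in `U_int` equals
`Canonical(ℓ; a_i–b_i)` for some `ℓ ∈ [N]`. -/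
theorem UInt_canonV_shortest (N k : ℕ) (hN : 1 ≤ N) (hk : 1 ≤ k) (i : Fin k) :
    (∀ r : Fin N,
      IsShortestCostPath (DIntE k N) (costInt k N) (DIntV.a i) (DIntV.b i)
        (canonV k N i r) ∧
      pathCost (costInt k N) (canonV k N i r) = 5 * k * N) ∧
    (∀ p : List (DIntV k N),
      IsShortestCostPath (DIntE k N) (costInt k N) (DIntV.a i) (DIntV.b i) p →
      ∃ ℓ : Fin N, p = canonV k N i ℓ) :=
  UInt_canonV_shortest_general N k i
end
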